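/- arXiv:1509.03938 — 2 statements merged into one kernel-verified Lean document; each statement's English description precedes it below -/
import Mathlib

section
/- Let Θ(·;λ) be a threshold function and let P be any penalty associated with Θ through the penalty construction. Consider the problem of minimizing F(B, C) = (1/2)‖Y − XB − C‖_F² + Σ_{i=1}^n P(‖c_i‖₂; λ) over B ∈ ℝ^{p×m} with rank(B) ≤ r and C ∈ ℝ^{n×m} with rows c_iᵀ. Then: (a) for any fixed B, the matrix C(B) = vecΘ(Y − XB; λ) (the multivariate thresholding applied row-wise) is a global minimizer of C ↦ F(B, C); and (b) for this choice, F(B, C(B)) = Σ_{i=1}^n ρ(‖y_i − Bᵀx_i‖₂; λ), where ρ(t;λ) = ∫₀^{|t|} ψ(u;λ) du and ψ(t;λ) = t − Θ(t;λ). Consequently, minimizing F(B,C) subject to rank(B) ≤ r is equivalent to the robust M-estimation problem of minimizing Σ_{i=1}^n ρ(‖y_i − Bᵀx_i‖₂; λ) subject to rank(B) ≤ r. -/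
/-!
The problem separates over the rows, and on a row only norms matter: `‖a - c‖ ≥ |‖a‖ - ‖c‖|`,
with equality when `c` is a nonnegative multiple of `a`, as `vecΘ(a;λ)` is. This reduces
everything to the scalar problem `min_{t ≥ 0} ½(z - t)² + P(t;λ)`.
Since `P ≥ P_Θ` with equality on the range of `Θ`, the minimum is attained at `t = Θ(z;λ)`:
the objective at `t` exceeds the one at `Θ(z;λ)` by `∫_{Θ(z;λ)}^t (Θ⁻¹(u;λ) - z) du ≥ 0`.
Comparing the minimal values `E(z₁)`, `E(z₂)` with the minimizers swapped pins `E(z₂) - E(z₁)`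
and `∫_{z₁}^{z₂} ψ` into one interval of length `(z₂ - z₁)(Θ(z₂;λ) - Θ(z₁;λ))`; summing over
finer and finer partitions of `[0, z]` gives `E(z) = ρ(z;λ)`, with no continuity of `Θ` needed.
-/

open MeasureTheory Matrix Filter
open scoped ENNReal NNReal BigOperators

noncomputable section

namespace RRRStmt

/-- Squared Frobenius norm `‖A‖_F²`. -/
def froSq {n m : ℕ} (A : Matrix (Fin n) (Fin m) ℝ) : ℝ := ∑ i, ∑ j, (A i j) ^ 2

/-- Frobenius norm `‖A‖_F`. -/
def fro {n m : ℕ} (A : Matrix (Fin n) (Fin m) ℝ) : ℝ := Real.sqrt (froSq A)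

/-- ℓ₂ norm of the `i`-th row of `A`. -/
def rowNorm {n m : ℕ} (A : Matrix (Fin n) (Fin m) ℝ) (i : Fin n) : ℝ :=
  Real.sqrt (∑ j, (A i j) ^ 2)

open Classical in
/-- Number of nonzero rows, `‖A‖_{2,0}`. -/
def numNZRows {n m : ℕ} (A : Matrix (Fin n) (Fin m) ℝ) : ℕ :=
  (Finset.univ.filter fun i => A i ≠ 0).card

open Classical in
/-- Row support of `A`: indices of nonzero rows. -/
def rowSupp {n m : ℕ} (A : Matrix (Fin n) (Fin m) ℝ) : Finset (Fin n) :=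
  Finset.univ.filter fun i => A i ≠ 0

open Classical in
/-- Number of entries at which two matrices differ, `‖A - B‖₀`. -/
def numDiff {n m : ℕ} (A B : Matrix (Fin n) (Fin m) ℝ) : ℕ :=
  (Finset.univ.filter fun q : Fin n × Fin m => A q.1 q.2 ≠ B q.1 q.2).card

/-- A threshold function `Θ(t; λ)`: odd, nondecreasing in `t`, tending to `∞`, and with
`0 ≤ Θ(t;λ) ≤ t` for `t ≥ 0`. -/
def IsThresholdFun (Θ : ℝ → ℝ → ℝ) : Prop :=
  (∀ t lam : ℝ, 0 ≤ lam → Θ (-t) lam = -Θ t lam) ∧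
  (∀ t t' lam : ℝ, 0 ≤ lam → t ≤ t' → Θ t lam ≤ Θ t' lam) ∧
  (∀ lam : ℝ, 0 ≤ lam → Tendsto (fun t => Θ t lam) atTop atTop) ∧
  (∀ t lam : ℝ, 0 ≤ lam → 0 ≤ t → 0 ≤ Θ t lam ∧ Θ t lam ≤ t)

/-- `Θ⁻¹(u;λ) = sup {s : Θ(s;λ) ≤ u}`. -/
def ThetaInv (Θ : ℝ → ℝ → ℝ) (lam u : ℝ) : ℝ := sSup {s : ℝ | Θ s lam ≤ u}

/-- `P_Θ(t;λ) = ∫₀^{|t|} (Θ⁻¹(u;λ) - u) du`. -/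
def PTheta (Θ : ℝ → ℝ → ℝ) (t lam : ℝ) : ℝ := ∫ u in (0:ℝ)..|t|, (ThetaInv Θ lam u - u)

/-- The penalty `P` is associated with the threshold `Θ` through the penalty construction:
`P(t;λ) - P(0;λ) = P_Θ(t;λ) + q(t;λ)` for some nonnegative `q` vanishing on the range of `Θ`. -/
def IsPenaltyFor (Θ P : ℝ → ℝ → ℝ) : Prop :=
  ∃ q : ℝ → ℝ → ℝ, (∀ t lam : ℝ, 0 ≤ lam → 0 ≤ q t lam) ∧
    (∀ s lam : ℝ, 0 ≤ lam → q (Θ s lam) lam = 0) ∧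
    (∀ t lam : ℝ, 0 ≤ lam → P t lam - P 0 lam = PTheta Θ t lam + q t lam)

/-- Euclidean norm of a vector. -/
def vnorm {m : ℕ} (a : Fin m → ℝ) : ℝ := Real.sqrt (∑ j, (a j) ^ 2)

open Classical in
/-- Multivariate thresholding `vecΘ(a;λ) = a·Θ(‖a‖₂;λ)/‖a‖₂` (and `0` at `0`). -/
def vecTheta (Θ : ℝ → ℝ → ℝ) (lam : ℝ) {m : ℕ} (a : Fin m → ℝ) : Fin m → ℝ :=
  if a = 0 then 0 else (Θ (vnorm a) lam / vnorm a) • a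

/-- Row-wise multivariate thresholding of a matrix. -/
def matTheta (Θ : ℝ → ℝ → ℝ) (lam : ℝ) {n m : ℕ} (A : Matrix (Fin n) (Fin m) ℝ) :
    Matrix (Fin n) (Fin m) ℝ :=
  Matrix.of fun i => vecTheta Θ lam (A i)

/-- Hard-thresholding penalty `P_H(t;λ)`. -/
def PH (t lam : ℝ) : ℝ := if |t| < lam then -t ^ 2 / 2 + lam * |t| else lam ^ 2 / 2

/-- Law of an `n × m` noise matrix with i.i.d. `N(0, σ²)` entries. -/
def gaussianNoise (n m : ℕ) (σ : ℝ) : Measure (Fin n → Fin m → ℝ) :=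
  Measure.pi fun _ => Measure.pi fun _ => ProbabilityTheory.gaussianReal 0 (Real.toNNReal (σ ^ 2))

/-- Robust loss `ρ(t;λ) = ∫₀^{|t|} (u - Θ(u;λ)) du`. -/
def rho (Θ : ℝ → ℝ → ℝ) (lam t : ℝ) : ℝ := ∫ u in (0:ℝ)..|t|, (u - Θ u lam)


/-- The robust reduced-rank regression objective
`F(B,C) = ½‖Y - XB - C‖_F² + ∑ᵢ P(‖cᵢ‖₂;λ)`. -/
def Fobj {n m p : ℕ} (X : Matrix (Fin n) (Fin p) ℝ) (Y : Matrix (Fin n) (Fin m) ℝ)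
    (P : ℝ → ℝ → ℝ) (lam : ℝ) (B : Matrix (Fin p) (Fin m) ℝ)
    (C : Matrix (Fin n) (Fin m) ℝ) : ℝ :=
  (1/2) * froSq (Y - X * B - C) + ∑ i, P (rowNorm C i) lam

theorem eq_of_abs_sub_le_mul_sub {D h : ℝ → ℝ} {a b : ℝ} (hab : a ≤ b)
    (hD : ∀ x y, a ≤ x → x ≤ y → y ≤ b → |D y - D x| ≤ (y - x) * (h y - h x)) :
    D b = D a := by
  have hfine : ∀ N : ℕ, 0 < N → |D b - D a| ≤ (b - a) * (h b - h a) / N := by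
    intro N hN
    have hN' : (0 : ℝ) < N := Nat.cast_pos.2 hN
    set δ := (b - a) / N
    set x : ℕ → ℝ := fun k => a + k * δ
    have hδ : 0 ≤ δ := div_nonneg (sub_nonneg.2 hab) hN'.le
    have hstep : ∀ k, x (k + 1) - x k = δ := fun k => by simp only [x]; push_cast; ring
    have hx0 : x 0 = a := by simp [x]
    have hxN : x N = b := by simp only [x, δ]; field_simp; ring
    have hpiece : ∀ k ∈ Finset.range N,
        |D (x (k + 1)) - D (x k)| ≤ δ * (h (x (k + 1)) - h (x k)) := by
      intro k hk
      have hkN : ((k + 1 : ℕ) : ℝ) ≤ N := Nat.cast_le.2 (Finset.mem_range.1 hk)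
      have hxk : a ≤ x k := le_add_of_nonneg_right (mul_nonneg k.cast_nonneg hδ)
      have hxb : x (k + 1) ≤ b := by
        rw [← hxN]; simp only [x]; linarith [mul_le_mul_of_nonneg_right hkN hδ]
      rw [← hstep k]
      exact hD _ _ hxk (by linarith [hstep k]) hxb
    calc |D b - D a| = |∑ k ∈ Finset.range N, (D (x (k + 1)) - D (x k))| := by
          rw [Finset.sum_range_sub (fun k => D (x k)), hx0, hxN]
      _ ≤ ∑ k ∈ Finset.range N, δ * (h (x (k + 1)) - h (x k)) :=
          (Finset.abs_sum_le_sum_abs _ _).trans (Finset.sum_le_sum hpiece)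
      _ = (b - a) * (h b - h a) / N := by
          rw [← Finset.mul_sum, Finset.sum_range_sub (fun k => h (x k)), hx0, hxN]
          ring
  have hlim := tendsto_const_div_atTop_nhds_zero_nat ((b - a) * (h b - h a))
  have habs : |D b - D a| ≤ 0 :=
    ge_of_tendsto hlim (Filter.eventually_atTop.2 ⟨1, fun N hN => hfine N hN⟩)
  exact sub_eq_zero.1 (abs_nonpos_iff.1 habs)

theorem integral_id_sub_const (a b c : ℝ) :
    ∫ u in a..b, (u - c) = ((b - c) ^ 2 - (a - c) ^ 2) / 2 := by
  rw [intervalIntegral.integral_comp_sub_right (fun x => x), integral_id]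

namespace IsThresholdFun

variable {Θ : ℝ → ℝ → ℝ} {lam : ℝ}

theorem monotone (hΘ : IsThresholdFun Θ) (hlam : 0 ≤ lam) : Monotone (Θ · lam) :=
  fun _ _ h => hΘ.2.1 _ _ lam hlam h

theorem apply_nonneg (hΘ : IsThresholdFun Θ) (hlam : 0 ≤ lam) {t : ℝ} (ht : 0 ≤ t) :
    0 ≤ Θ t lam :=
  (hΘ.2.2.2 t lam hlam ht).1

theorem apply_le_self (hΘ : IsThresholdFun Θ) (hlam : 0 ≤ lam) {t : ℝ} (ht : 0 ≤ t) :
    Θ t lam ≤ t :=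
  (hΘ.2.2.2 t lam hlam ht).2

theorem apply_zero (hΘ : IsThresholdFun Θ) (hlam : 0 ≤ lam) : Θ 0 lam = 0 :=
  le_antisymm (hΘ.apply_le_self hlam le_rfl) (hΘ.apply_nonneg hlam le_rfl)

theorem bddAbove_sublevel (hΘ : IsThresholdFun Θ) (hlam : 0 ≤ lam) (u : ℝ) :
    BddAbove {s | Θ s lam ≤ u} := by
  obtain ⟨t₀, ht₀⟩ := Filter.eventually_atTop.1 ((hΘ.2.2.1 lam hlam).eventually_gt_atTop u)
  refine ⟨t₀, fun s hs => ?_⟩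
  by_contra! hst
  exact (ht₀ s hst.le).not_ge hs

theorem zero_mem_sublevel (hΘ : IsThresholdFun Θ) (hlam : 0 ≤ lam) {u : ℝ} (hu : 0 ≤ u) :
    (0 : ℝ) ∈ {s | Θ s lam ≤ u} := by
  simpa [hΘ.apply_zero hlam] using hu

theorem le_thetaInv (hΘ : IsThresholdFun Θ) (hlam : 0 ≤ lam) {z u : ℝ} (h : Θ z lam ≤ u) :
    z ≤ ThetaInv Θ lam u :=
  le_csSup (hΘ.bddAbove_sublevel hlam u) h

theorem thetaInv_le (hΘ : IsThresholdFun Θ) (hlam : 0 ≤ lam) {z u : ℝ} (hu : 0 ≤ u)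
    (h : u < Θ z lam) : ThetaInv Θ lam u ≤ z := by
  refine csSup_le ⟨0, hΘ.zero_mem_sublevel hlam hu⟩ fun s hs => ?_
  by_contra! hzs
  exact (h.trans_le (hΘ.monotone hlam hzs.le)).not_ge hs

theorem thetaInv_monotoneOn (hΘ : IsThresholdFun Θ) (hlam : 0 ≤ lam) :
    MonotoneOn (ThetaInv Θ lam) (Set.Ici 0) := fun _ ha b _ hab =>
  csSup_le_csSup (hΘ.bddAbove_sublevel hlam b) ⟨0, hΘ.zero_mem_sublevel hlam ha⟩
    fun _ hs => le_trans hs hab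

theorem intervalIntegrable_thetaInv (hΘ : IsThresholdFun Θ) (hlam : 0 ≤ lam) {a b : ℝ}
    (ha : 0 ≤ a) (hb : 0 ≤ b) : IntervalIntegrable (ThetaInv Θ lam) volume a b :=
  ((hΘ.thetaInv_monotoneOn hlam).mono fun _ hx => (le_inf ha hb).trans hx.1).intervalIntegrable

theorem pTheta_sub (hΘ : IsThresholdFun Θ) (hlam : 0 ≤ lam) {s t : ℝ} (hs : 0 ≤ s)
    (ht : 0 ≤ t) :
    PTheta Θ t lam - PTheta Θ s lam = ∫ u in s..t, (ThetaInv Θ lam u - u) := by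
  rw [PTheta, PTheta, abs_of_nonneg ht, abs_of_nonneg hs]
  exact intervalIntegral.integral_interval_sub_left
    ((hΘ.intervalIntegrable_thetaInv hlam le_rfl ht).sub intervalIntegral.intervalIntegrable_id)
    ((hΘ.intervalIntegrable_thetaInv hlam le_rfl hs).sub intervalIntegral.intervalIntegrable_id)

theorem sq_add_pTheta_le (hΘ : IsThresholdFun Θ) (hlam : 0 ≤ lam) {z t : ℝ} (hz : 0 ≤ z)
    (ht : 0 ≤ t) :
    (1 / 2) * (z - Θ z lam) ^ 2 + PTheta Θ (Θ z lam) lam ≤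
      (1 / 2) * (z - t) ^ 2 + PTheta Θ t lam := by
  set w := Θ z lam
  have hw : 0 ≤ w := hΘ.apply_nonneg hlam hz
  have hint : IntervalIntegrable (fun u => ThetaInv Θ lam u - z) volume w t :=
    (hΘ.intervalIntegrable_thetaInv hlam hw ht).sub intervalIntegrable_const
  have hgap : (1 / 2) * (z - t) ^ 2 + PTheta Θ t lam - ((1 / 2) * (z - w) ^ 2 + PTheta Θ w lam)
      = ∫ u in w..t, (ThetaInv Θ lam u - z) := by
    have hsplit : ∫ u in w..t, (ThetaInv Θ lam u - z)
        = (∫ u in w..t, (ThetaInv Θ lam u - u)) + ∫ u in w..t, (u - z) := by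
      rw [← intervalIntegral.integral_add
        ((hΘ.intervalIntegrable_thetaInv hlam hw ht).sub intervalIntegral.intervalIntegrable_id)
        (intervalIntegral.intervalIntegrable_id.sub intervalIntegrable_const)]
      exact intervalIntegral.integral_congr fun u _ => by ring
    rw [hsplit, ← hΘ.pTheta_sub hlam hw ht, integral_id_sub_const]
    ring
  suffices 0 ≤ ∫ u in w..t, (ThetaInv Θ lam u - z) by linarith
  rcases le_total w t with hwt | htw
  · exact intervalIntegral.integral_nonneg hwt fun u hu => sub_nonneg.2 (hΘ.le_thetaInv hlam hu.1)
  · rw [intervalIntegral.integral_symm, neg_nonneg]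
    simpa using intervalIntegral.integral_mono_on_of_le_Ioo htw hint.symm
      (intervalIntegrable_const (c := 0)) fun u hu =>
        sub_nonpos.2 (hΘ.thetaInv_le hlam (ht.trans hu.1.le) hu.2)

end IsThresholdFun

/-- The minimum over `t ≥ 0` of `½(z - t)² + P_Θ(t;λ)`, attained at `t = Θ(z;λ)`
(`IsThresholdFun.sq_add_pTheta_le`). -/
def envelope (Θ : ℝ → ℝ → ℝ) (lam z : ℝ) : ℝ :=
  (1 / 2) * (z - Θ z lam) ^ 2 + PTheta Θ (Θ z lam) lam

section Envelope

variable {Θ : ℝ → ℝ → ℝ} {lam : ℝ}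

theorem envelope_sub_mem_Icc (hΘ : IsThresholdFun Θ) (hlam : 0 ≤ lam) {z₁ z₂ : ℝ}
    (h₁ : 0 ≤ z₁) (h₁₂ : z₁ ≤ z₂) :
    envelope Θ lam z₂ - envelope Θ lam z₁ ∈
      Set.Icc (((z₂ - Θ z₂ lam) ^ 2 - (z₁ - Θ z₂ lam) ^ 2) / 2)
        (((z₂ - Θ z₁ lam) ^ 2 - (z₁ - Θ z₁ lam) ^ 2) / 2) := by
  have h₂ : 0 ≤ z₂ := h₁.trans h₁₂
  have hlo := hΘ.sq_add_pTheta_le hlam h₁ (hΘ.apply_nonneg hlam h₂)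
  have hhi := hΘ.sq_add_pTheta_le hlam h₂ (hΘ.apply_nonneg hlam h₁)
  constructor <;> simp only [envelope] <;> linarith

theorem integral_sub_theta_mem_Icc (hΘ : IsThresholdFun Θ) (hlam : 0 ≤ lam) {z₁ z₂ : ℝ}
    (h₁₂ : z₁ ≤ z₂) :
    ∫ u in z₁..z₂, (u - Θ u lam) ∈
      Set.Icc (((z₂ - Θ z₂ lam) ^ 2 - (z₁ - Θ z₂ lam) ^ 2) / 2)
        (((z₂ - Θ z₁ lam) ^ 2 - (z₁ - Θ z₁ lam) ^ 2) / 2) := by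
  have hmono := hΘ.monotone hlam
  have hint : IntervalIntegrable (fun u => u - Θ u lam) volume z₁ z₂ :=
    intervalIntegral.intervalIntegrable_id.sub hmono.intervalIntegrable
  rw [← integral_id_sub_const, ← integral_id_sub_const]
  exact ⟨intervalIntegral.integral_mono_on h₁₂
      (intervalIntegral.intervalIntegrable_id.sub intervalIntegrable_const) hint
      fun u hu => sub_le_sub_left (hmono hu.2) u,
    intervalIntegral.integral_mono_on h₁₂ hint
      (intervalIntegral.intervalIntegrable_id.sub intervalIntegrable_const)
      fun u hu => sub_le_sub_left (hmono hu.1) u⟩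

theorem envelope_eq_rho (hΘ : IsThresholdFun Θ) (hlam : 0 ≤ lam) {z : ℝ} (hz : 0 ≤ z) :
    envelope Θ lam z = rho Θ lam z := by
  set D := fun x => envelope Θ lam x - ∫ u in (0 : ℝ)..x, (u - Θ u lam)
  have hint : ∀ x y, IntervalIntegrable (fun u => u - Θ u lam) volume x y := fun _ _ =>
    intervalIntegral.intervalIntegrable_id.sub (hΘ.monotone hlam).intervalIntegrable
  have hconst : D z = D 0 := eq_of_abs_sub_le_mul_sub (h := (Θ · lam)) hz
    fun x y hx hxy _ => by
      have hE := envelope_sub_mem_Icc hΘ hlam hx hxy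
      have hI := integral_sub_theta_mem_Icc hΘ hlam hxy
      have hlen : ((y - Θ x lam) ^ 2 - (x - Θ x lam) ^ 2) / 2
          - ((y - Θ y lam) ^ 2 - (x - Θ y lam) ^ 2) / 2 = (y - x) * (Θ y lam - Θ x lam) := by
        ring
      simp only [D, sub_sub_sub_comm _ (∫ u in (0 : ℝ)..y, (u - Θ u lam)),
        intervalIntegral.integral_interval_sub_left (hint 0 y) (hint 0 x)]
      rw [abs_sub_le_iff]
      constructor <;> linarith [hE.1, hE.2, hI.1, hI.2]
  simpa [D, envelope, rho, PTheta, hΘ.apply_zero hlam, abs_of_nonneg hz, sub_eq_zero] using hconst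

end Envelope

namespace IsPenaltyFor

variable {Θ P : ℝ → ℝ → ℝ} {lam : ℝ}

theorem pTheta_le (hP : IsPenaltyFor Θ P) (hlam : 0 ≤ lam) (hP0 : P 0 lam = 0) (t : ℝ) :
    PTheta Θ t lam ≤ P t lam := by
  obtain ⟨q, hq, -, hPq⟩ := hP
  linarith [hq t lam hlam, hPq t lam hlam]

theorem apply_theta (hP : IsPenaltyFor Θ P) (hlam : 0 ≤ lam) (hP0 : P 0 lam = 0) (s : ℝ) :
    P (Θ s lam) lam = PTheta Θ (Θ s lam) lam := by
  obtain ⟨q, -, hqΘ, hPq⟩ := hP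
  linarith [hqΘ s lam hlam, hPq (Θ s lam) lam hlam]

end IsPenaltyFor

section Rows

variable {m : ℕ}

theorem vnorm_eq_norm (a : Fin m → ℝ) : vnorm a = ‖WithLp.toLp 2 a‖ := by
  simp [vnorm, EuclideanSpace.norm_eq]

theorem vnorm_nonneg (a : Fin m → ℝ) : 0 ≤ vnorm a := Real.sqrt_nonneg _

theorem vnorm_sq (a : Fin m → ℝ) : vnorm a ^ 2 = ∑ j, a j ^ 2 :=
  Real.sq_sqrt (Finset.sum_nonneg fun j _ => sq_nonneg (a j))

theorem sq_vnorm_sub_vnorm_le (a c : Fin m → ℝ) :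
    (vnorm a - vnorm c) ^ 2 ≤ vnorm (a - c) ^ 2 := by
  rw [← sq_abs]
  refine pow_le_pow_left₀ (abs_nonneg _) ?_ 2
  simpa [vnorm_eq_norm] using abs_norm_sub_norm_le (WithLp.toLp 2 a) (WithLp.toLp 2 c)

theorem vecTheta_eq_smul (Θ : ℝ → ℝ → ℝ) (lam : ℝ) (a : Fin m → ℝ) :
    vecTheta Θ lam a = (Θ (vnorm a) lam / vnorm a) • a := by
  unfold vecTheta
  split_ifs with ha <;> simp [ha]

variable {Θ : ℝ → ℝ → ℝ} {lam : ℝ}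

theorem vnorm_vecTheta (hΘ : IsThresholdFun Θ) (hlam : 0 ≤ lam) (a : Fin m → ℝ) :
    vnorm (vecTheta Θ lam a) = Θ (vnorm a) lam := by
  rcases (vnorm_nonneg a).eq_or_lt with ha | ha
  · have : a = 0 := by
      rw [eq_comm, vnorm_eq_norm, norm_eq_zero] at ha
      simpa using ha
    simp [this, vecTheta, vnorm, hΘ.apply_zero hlam]
  · rw [vecTheta_eq_smul, vnorm_eq_norm, WithLp.toLp_smul, norm_smul, ← vnorm_eq_norm,
      Real.norm_of_nonneg (div_nonneg (hΘ.apply_nonneg hlam ha.le) ha.le),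
      div_mul_cancel₀ _ ha.ne']

theorem vnorm_sub_vecTheta (hΘ : IsThresholdFun Θ) (hlam : 0 ≤ lam) (a : Fin m → ℝ) :
    vnorm (a - vecTheta Θ lam a) = vnorm a - Θ (vnorm a) lam := by
  rcases (vnorm_nonneg a).eq_or_lt with ha | ha
  · simp [← ha, vecTheta, hΘ.apply_zero hlam]
  · have hk : Θ (vnorm a) lam / vnorm a ≤ 1 := (div_le_one ha).2 (hΘ.apply_le_self hlam ha.le)
    have hsub : a - (Θ (vnorm a) lam / vnorm a) • a =
        (1 - Θ (vnorm a) lam / vnorm a) • a := by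
      rw [sub_smul, one_smul]
    rw [vecTheta_eq_smul, hsub, vnorm_eq_norm, WithLp.toLp_smul, norm_smul,
      ← vnorm_eq_norm, Real.norm_of_nonneg (sub_nonneg.2 hk), sub_mul, one_mul,
      div_mul_cancel₀ _ ha.ne']

def rowObj (P : ℝ → ℝ → ℝ) (lam : ℝ) (a c : Fin m → ℝ) : ℝ :=
  (1 / 2) * vnorm (a - c) ^ 2 + P (vnorm c) lam

theorem rho_le_rowObj {P : ℝ → ℝ → ℝ} (hΘ : IsThresholdFun Θ) (hlam : 0 ≤ lam)
    (hP : ∀ t, PTheta Θ t lam ≤ P t lam) (a c : Fin m → ℝ) :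
    rho Θ lam (vnorm a) ≤ rowObj P lam a c := by
  rw [← envelope_eq_rho hΘ hlam (vnorm_nonneg a)]
  have hmin := hΘ.sq_add_pTheta_le hlam (vnorm_nonneg a) (vnorm_nonneg c)
  have hnorm := sq_vnorm_sub_vnorm_le a c
  simp only [envelope, rowObj]
  linarith [hP (vnorm c)]

theorem rowObj_vecTheta {P : ℝ → ℝ → ℝ} (hΘ : IsThresholdFun Θ) (hlam : 0 ≤ lam)
    (hP : ∀ s, P (Θ s lam) lam = PTheta Θ (Θ s lam) lam) (a : Fin m → ℝ) :
    rowObj P lam a (vecTheta Θ lam a) = rho Θ lam (vnorm a) := by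
  rw [← envelope_eq_rho hΘ hlam (vnorm_nonneg a), rowObj, vnorm_sub_vecTheta hΘ hlam,
    vnorm_vecTheta hΘ hlam, hP, envelope]

end Rows

theorem Fobj_eq_sum_rowObj {n m p : ℕ} (X : Matrix (Fin n) (Fin p) ℝ)
    (Y : Matrix (Fin n) (Fin m) ℝ) (P : ℝ → ℝ → ℝ) (lam : ℝ) (B : Matrix (Fin p) (Fin m) ℝ)
    (C : Matrix (Fin n) (Fin m) ℝ) :
    Fobj X Y P lam B C = ∑ i, rowObj P lam ((Y - X * B) i) (C i) := by
  simp only [Fobj, froSq, rowObj, vnorm_sq, Finset.mul_sum, ← Finset.sum_add_distrib]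
  rfl

theorem exists_forall_le_iff_forall_le_profile {α β γ : Type*} [Preorder γ] (f : α → β → γ)
    (c : α → β) (hc : ∀ a b, f a (c a) ≤ f a b) (S : α → Prop) (a₀ : α) :
    (∃ b₀, ∀ a b, S a → f a₀ b₀ ≤ f a b) ↔ ∀ a, S a → f a₀ (c a₀) ≤ f a (c a) :=
  ⟨fun ⟨b₀, hb₀⟩ a ha => (hc a₀ b₀).trans (hb₀ a (c a) ha),
    fun h => ⟨c a₀, fun a b ha => (h a ha).trans (hc a b)⟩⟩

/-- Theorem 2(i): (a) for fixed `B`, `C(B) = vecΘ(Y - XB;λ)` globally minimizes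
`C ↦ F(B,C)`; (b) `F(B, C(B)) = ∑ᵢ ρ(‖yᵢ - Bᵀxᵢ‖₂;λ)` with `ρ(t;λ) = ∫₀^{|t|} (u - Θ(u;λ)) du`;
(c) consequently, minimizing `F` subject to `rank(B) ≤ r` is equivalent to the robust
M-estimation problem. -/
theorem rrr_equiv_M_estimation {n m p : ℕ}
    (X : Matrix (Fin n) (Fin p) ℝ) (Y : Matrix (Fin n) (Fin m) ℝ)
    (Θ P : ℝ → ℝ → ℝ) (hΘ : IsThresholdFun Θ) (hP : IsPenaltyFor Θ P)
    (lam : ℝ) (hlam : 0 ≤ lam) (hP0 : P 0 lam = 0) (r : ℕ) :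
    (∀ (B : Matrix (Fin p) (Fin m) ℝ) (C : Matrix (Fin n) (Fin m) ℝ),
      Fobj X Y P lam B (matTheta Θ lam (Y - X * B)) ≤ Fobj X Y P lam B C) ∧
    (∀ B : Matrix (Fin p) (Fin m) ℝ,
      Fobj X Y P lam B (matTheta Θ lam (Y - X * B)) =
        ∑ i, rho Θ lam (rowNorm (Y - X * B) i)) ∧
    (∀ Bh : Matrix (Fin p) (Fin m) ℝ, Bh.rank ≤ r →
      ((∃ Ch : Matrix (Fin n) (Fin m) ℝ,
          ∀ (B : Matrix (Fin p) (Fin m) ℝ) (C : Matrix (Fin n) (Fin m) ℝ), B.rank ≤ r →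
            Fobj X Y P lam Bh Ch ≤ Fobj X Y P lam B C) ↔
        (∀ B : Matrix (Fin p) (Fin m) ℝ, B.rank ≤ r →
          (∑ i, rho Θ lam (rowNorm (Y - X * Bh) i)) ≤
            ∑ i, rho Θ lam (rowNorm (Y - X * B) i)))) := by
  have hvalue : ∀ B : Matrix (Fin p) (Fin m) ℝ,
      Fobj X Y P lam B (matTheta Θ lam (Y - X * B)) = ∑ i, rho Θ lam (rowNorm (Y - X * B) i) :=
    fun B => by
      rw [Fobj_eq_sum_rowObj]
      exact Finset.sum_congr rfl fun i _ => rowObj_vecTheta hΘ hlam (hP.apply_theta hlam hP0) _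
  have hmin : ∀ (B : Matrix (Fin p) (Fin m) ℝ) (C : Matrix (Fin n) (Fin m) ℝ),
      Fobj X Y P lam B (matTheta Θ lam (Y - X * B)) ≤ Fobj X Y P lam B C := fun B C => by
    rw [hvalue, Fobj_eq_sum_rowObj]
    exact Finset.sum_le_sum fun i _ => rho_le_rowObj hΘ hlam (hP.pTheta_le hlam hP0) _ _
  refine ⟨hmin, hvalue, fun Bh _ => ?_⟩
  simpa only [hvalue] using exists_forall_le_iff_forall_le_profile (Fobj X Y P lam)
    (fun B => matTheta Θ lam (Y - X * B)) hmin (fun B => B.rank ≤ r) Bh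

end RRRStmt
end
end

section
/- Consider min over β ∈ ℝ^p of l(β) = (1/2)‖y − β‖₂² subject to ‖β‖₀ ≤ q. Then (a) the quantile-thresholded vector β̂ = Θ#(y; q), which keeps the q entries of y largest in absolute value and sets all others to zero, is a global minimizer; and (b) if the support size of β̂ equals q, then for any θ ≥ 1 and any β with ‖β‖₀ ≤ q/θ, one has l(β) − l(β̂) ≥ (1 − L(J, Ĵ))·(1/2)‖β̂ − β‖₂², where J and Ĵ are the supports of β and β̂, and L(J, Ĵ) = (|J \ Ĵ|/|Ĵ \ J|)^{1/2} ≤ (|J|/|Ĵ|)^{1/2} ≤ θ^{−1/2}. -/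
/-!
Write `ŷ` for `y` restricted to `S` and `J` for the support of `β`. Every `|y j|` with
`j ∈ S \ J` dominates every `|y i|` with `i ∈ J \ S`, and `#(J \ S) ≤ #(S \ J)`, so the mass of
`y²` on `J \ S` is at most `#(J \ S) / #(S \ J)` times its mass on `S \ J`.
For (a) this lets one trade `J \ S` for `S \ J` in `‖y - β‖² ≥ ∑_{Jᶜ} y²`, which turns the
right side into `∑_{Sᶜ} y² = ‖y - ŷ‖²`.
For (b), expanding `‖y - β‖²` around `ŷ` leaves the cross term `-2 ∑_{J \ S} y β`; Cauchy–Schwarz,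
the mass bound and AM–GM control it by `L(J, Ĵ) · ‖ŷ - β‖²`, because
`‖ŷ - β‖² ≥ ∑_{S \ J} y² + ∑_{J \ S} β²`.
-/

open MeasureTheory Matrix Filter
open scoped ENNReal NNReal BigOperators

noncomputable section

namespace RRRStmt

open Classical in
/-- Support of a vector. -/
def vsupp {p : ℕ} (β : Fin p → ℝ) : Finset (Fin p) :=
  Finset.univ.filter fun i => β i ≠ 0

end RRRStmt

namespace Finset

variable {ι : Type*}

theorem card_nsmul_sum_le_card_nsmul_sum {M : Type*} [AddCommMonoid M] [PartialOrder M]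
    [IsOrderedAddMonoid M] {s t : Finset ι} {f : ι → M} (h : ∀ i ∈ s, ∀ j ∈ t, f i ≤ f j) :
    #t • ∑ i ∈ s, f i ≤ #s • ∑ j ∈ t, f j :=
  calc #t • ∑ i ∈ s, f i = ∑ i ∈ s, ∑ _j ∈ t, f i := by
        rw [smul_sum]; simp only [sum_const]
    _ ≤ ∑ _i ∈ s, ∑ j ∈ t, f j := sum_le_sum fun i hi => sum_le_sum fun j hj => h i hi j hj
    _ = #s • ∑ j ∈ t, f j := sum_const _

theorem sum_le_card_div_card_mul_sum {s t : Finset ι} {f : ι → ℝ} (hst : #s ≤ #t)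
    (h : ∀ i ∈ s, ∀ j ∈ t, f i ≤ f j) :
    ∑ i ∈ s, f i ≤ (#s / #t : ℝ) * ∑ j ∈ t, f j := by
  rcases t.eq_empty_or_nonempty with rfl | ht
  · simp [card_eq_zero.mp (Nat.le_zero.mp hst)]
  · have hav := card_nsmul_sum_le_card_nsmul_sum h
    simp only [nsmul_eq_mul] at hav
    rw [div_mul_eq_mul_div, le_div_iff₀ (by exact_mod_cast ht.card_pos)]
    linarith

theorem sum_le_sum_of_card_le_of_forall_le {s t : Finset ι} {f : ι → ℝ} (hst : #s ≤ #t)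
    (hf : ∀ j ∈ t, 0 ≤ f j) (h : ∀ i ∈ s, ∀ j ∈ t, f i ≤ f j) :
    ∑ i ∈ s, f i ≤ ∑ j ∈ t, f j := by
  have hratio : (#s / #t : ℝ) ≤ 1 := div_le_one_of_le₀ (by exact_mod_cast hst) (by positivity)
  calc ∑ i ∈ s, f i ≤ (#s / #t : ℝ) * ∑ j ∈ t, f j := sum_le_card_div_card_mul_sum hst h
    _ ≤ ∑ j ∈ t, f j := mul_le_of_le_one_left (sum_nonneg hf) hratio

theorem sum_compl_add_sum_sdiff_comm [Fintype ι] [DecidableEq ι] {M : Type*} [AddCommGroup M]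
    (s t : Finset ι) (f : ι → M) :
    ∑ i ∈ sᶜ, f i + ∑ i ∈ s \ t, f i = ∑ i ∈ tᶜ, f i + ∑ i ∈ t \ s, f i := by
  have hs := sum_compl_add_sum s f
  have ht := sum_compl_add_sum t f
  rw [← sum_inter_add_sum_sdiff s t] at hs
  rw [← sum_inter_add_sum_sdiff t s, inter_comm] at ht
  have h := hs.trans ht.symm
  rw [add_left_comm, add_left_comm (∑ i ∈ tᶜ, f i)] at h
  exact add_left_cancel h

theorem card_sdiff_div_card_sdiff_le [DecidableEq ι] {s t : Finset ι} (hst : #s ≤ #t) :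
    (#(s \ t) / #(t \ s) : ℝ) ≤ #s / #t := by
  have hs := card_sdiff_add_card_inter s t
  have ht := card_sdiff_add_card_inter t s
  rw [inter_comm] at ht
  have hsdiff : #(s \ t) ≤ #(t \ s) := card_sdiff_le_card_sdiff_iff.mpr hst
  rcases Nat.eq_zero_or_pos #(t \ s) with h0 | h0
  · rw [h0, Nat.cast_zero, div_zero]; positivity
  · rw [div_le_div_iff₀ (by exact_mod_cast h0) (by exact_mod_cast h0.trans_le (by omega))]
    rw [← hs, ← ht]
    push_cast
    nlinarith [(Nat.cast_le (α := ℝ)).mpr hsdiff, Nat.cast_nonneg (α := ℝ) #(s ∩ t)]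

theorem sum_mul_le_sqrt_card_div_mul {s t : Finset ι} {f g : ι → ℝ} (hst : #s ≤ #t)
    (h : ∀ i ∈ s, ∀ j ∈ t, |f i| ≤ |f j|) :
    ∑ i ∈ s, f i * g i ≤ √(#s / #t) * ((∑ j ∈ t, f j ^ 2 + ∑ i ∈ s, g i ^ 2) / 2) := by
  set F := √(∑ j ∈ t, f j ^ 2)
  set G := √(∑ i ∈ s, g i ^ 2)
  have hsq : ∀ i ∈ s, ∀ j ∈ t, f i ^ 2 ≤ f j ^ 2 := fun i hi j hj => sq_le_sq.mpr (h i hi j hj)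
  have hfs : √(∑ i ∈ s, f i ^ 2) ≤ √(#s / #t) * F := by
    rw [← Real.sqrt_mul (by positivity)]
    exact Real.sqrt_le_sqrt (sum_le_card_div_card_mul_sum hst hsq)
  have hFG : F * G ≤ (F ^ 2 + G ^ 2) / 2 := by nlinarith [sq_nonneg (F - G)]
  calc ∑ i ∈ s, f i * g i ≤ √(∑ i ∈ s, f i ^ 2) * G := Real.sum_mul_le_sqrt_mul_sqrt s f g
    _ ≤ √(#s / #t) * F * G := by gcongr
    _ ≤ √(#s / #t) * ((F ^ 2 + G ^ 2) / 2) := by rw [mul_assoc]; gcongr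
    _ = _ := by
      rw [Real.sq_sqrt (sum_nonneg fun _ _ => sq_nonneg _),
        Real.sq_sqrt (sum_nonneg fun _ _ => sq_nonneg _)]

end Finset

theorem Real.sqrt_div_le_inv_sqrt {a b θ : ℝ} (hb : 0 ≤ b) (hθ : 0 < θ) (h : a ≤ b / θ) :
    √(a / b) ≤ (√θ)⁻¹ := by
  rw [← Real.sqrt_inv]
  exact Real.sqrt_le_sqrt (div_le_of_le_mul₀ hb (inv_nonneg.mpr hθ.le) (by rwa [inv_mul_eq_div]))

namespace RRRStmt

open Finset

variable {p : ℕ}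

@[simp]
theorem mem_vsupp {β : Fin p → ℝ} {i : Fin p} : i ∈ vsupp β ↔ β i ≠ 0 := by
  simp [vsupp]

theorem eq_zero_of_notMem_vsupp {β : Fin p → ℝ} {i : Fin p} (h : i ∉ vsupp β) : β i = 0 := by
  simpa using h

theorem vsupp_piecewise_subset (S : Finset (Fin p)) (y : Fin p → ℝ) :
    vsupp (S.piecewise y 0) ⊆ S := fun i hi => by
  by_contra hiS
  simp [hiS] at hi

section

variable (y β : Fin p → ℝ) (S : Finset (Fin p))

theorem sum_sq_sub_piecewise : ∑ i, (y i - S.piecewise y 0 i) ^ 2 = ∑ i ∈ Sᶜ, y i ^ 2 := by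
  rw [← sum_add_sum_compl S, sum_eq_zero fun i hi => by simp [hi], zero_add]
  exact sum_congr rfl fun i hi => by simp [mem_compl.mp hi]

theorem sum_sq_compl_vsupp_le : ∑ i ∈ (vsupp β)ᶜ, y i ^ 2 ≤ ∑ i, (y i - β i) ^ 2 :=
  calc ∑ i ∈ (vsupp β)ᶜ, y i ^ 2 = ∑ i ∈ (vsupp β)ᶜ, (y i - β i) ^ 2 :=
        sum_congr rfl fun i hi => by rw [eq_zero_of_notMem_vsupp (mem_compl.mp hi), sub_zero]
    _ ≤ ∑ i, (y i - β i) ^ 2 := sum_le_univ_sum_of_nonneg fun _ => sq_nonneg _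

theorem sum_sq_sub_piecewise_le (hsel : ∀ i ∈ S, ∀ j ∉ S, |y j| ≤ |y i|)
    (hβ : #(vsupp β) ≤ #S) :
    ∑ i, (y i - S.piecewise y 0 i) ^ 2 ≤ ∑ i, (y i - β i) ^ 2 := by
  have hswap : ∑ i ∈ vsupp β \ S, y i ^ 2 ≤ ∑ i ∈ S \ vsupp β, y i ^ 2 :=
    sum_le_sum_of_card_le_of_forall_le (card_sdiff_le_card_sdiff_iff.mpr hβ)
      (fun _ _ => sq_nonneg _)
      fun i hi j hj => sq_le_sq.mpr (hsel j (mem_sdiff.mp hj).1 i (mem_sdiff.mp hi).2)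
  have hexchange := sum_compl_add_sum_sdiff_comm S (vsupp β) fun i => y i ^ 2
  rw [sum_sq_sub_piecewise]
  linarith [sum_sq_compl_vsupp_le y β]

theorem sum_sq_sub_eq_add_sub_cross :
    ∑ i, (y i - β i) ^ 2 = ∑ i, (y i - S.piecewise y 0 i) ^ 2
      + ∑ i, (S.piecewise y 0 i - β i) ^ 2 - 2 * ∑ i ∈ vsupp β \ S, y i * β i := by
  set ŷ := S.piecewise y 0
  have hcross : ∑ i, (y i - ŷ i) * (ŷ i - β i) = -∑ i ∈ vsupp β \ S, y i * β i := by
    rw [← sum_subset (subset_univ (vsupp β \ S)), ← sum_neg_distrib]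
    · refine sum_congr rfl fun i hi => ?_
      simp [ŷ, (mem_sdiff.mp hi).2]
    · intro i _ hi
      by_cases hiS : i ∈ S
      · simp [ŷ, hiS]
      · have hiβ : i ∉ vsupp β := fun h => hi (mem_sdiff.mpr ⟨h, hiS⟩)
        simp [ŷ, hiS, eq_zero_of_notMem_vsupp hiβ]
  calc ∑ i, (y i - β i) ^ 2
      = ∑ i, ((y i - ŷ i) ^ 2 + (ŷ i - β i) ^ 2 + 2 * ((y i - ŷ i) * (ŷ i - β i))) :=
        sum_congr rfl fun i _ => by ring
    _ = _ := by rw [sum_add_distrib, sum_add_distrib, ← mul_sum, hcross]; ring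

theorem sum_sq_sdiff_add_sum_sq_sdiff_le :
    ∑ i ∈ S \ vsupp β, y i ^ 2 + ∑ i ∈ vsupp β \ S, β i ^ 2
      ≤ ∑ i, (S.piecewise y 0 i - β i) ^ 2 := by
  have hon : ∑ i ∈ S \ vsupp β, y i ^ 2 = ∑ i ∈ S \ vsupp β, (S.piecewise y 0 i - β i) ^ 2 :=
    sum_congr rfl fun i hi => by
      rw [piecewise_eq_of_mem _ _ _ (mem_sdiff.mp hi).1,
        eq_zero_of_notMem_vsupp (mem_sdiff.mp hi).2, sub_zero]
  have hoff : ∑ i ∈ vsupp β \ S, β i ^ 2 = ∑ i ∈ vsupp β \ S, (S.piecewise y 0 i - β i) ^ 2 :=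
    sum_congr rfl fun i hi => by
      rw [piecewise_eq_of_notMem _ _ _ (mem_sdiff.mp hi).2, Pi.zero_apply, zero_sub, neg_sq]
  rw [hon, hoff, ← sum_union disjoint_sdiff_sdiff]
  exact sum_le_univ_sum_of_nonneg fun _ => sq_nonneg _

theorem one_sub_sqrt_mul_le_sum_sq_sub_sub (hsel : ∀ i ∈ S, ∀ j ∉ S, |y j| ≤ |y i|)
    (hβ : #(vsupp β) ≤ #S) :
    (1 - √(#(vsupp β \ S) / #(S \ vsupp β))) * ((1/2) * ∑ i, (S.piecewise y 0 i - β i) ^ 2)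
      ≤ (1/2) * ∑ i, (y i - β i) ^ 2 - (1/2) * ∑ i, (y i - S.piecewise y 0 i) ^ 2 := by
  have hcross := sum_mul_le_sqrt_card_div_mul (f := y) (g := β)
    (card_sdiff_le_card_sdiff_iff.mpr hβ)
    fun i hi j hj => hsel j (mem_sdiff.mp hj).1 i (mem_sdiff.mp hi).2
  have hsplit := mul_le_mul_of_nonneg_left (sum_sq_sdiff_add_sum_sq_sdiff_le y β S)
    (Real.sqrt_nonneg (#(vsupp β \ S) / #(S \ vsupp β)))
  rw [sum_sq_sub_eq_add_sub_cross y β S]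
  linarith

end

/-- Lemma 7: (a) the quantile-thresholded vector `β̂ = Θ#(y;q)` (keeping the
`q` largest entries of `y` in absolute value) globally minimizes `l(β) = ½‖y - β‖₂²` over
`‖β‖₀ ≤ q`; (b) if `‖β̂‖₀ = q`, then for any `θ ≥ 1` and `β` with `‖β‖₀ ≤ q/θ`,
`l(β) - l(β̂) ≥ (1 - L(J,Ĵ))·½‖β̂ - β‖₂²` where
`L(J,Ĵ) = (|J∖Ĵ|/|Ĵ∖J|)^{1/2} ≤ (|J|/|Ĵ|)^{1/2} ≤ θ^{-1/2}`. -/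
theorem quantile_thresholding_properties {p q : ℕ} (y : Fin p → ℝ)
    (S : Finset (Fin p)) (hcard : S.card = q)
    (hsel : ∀ i ∈ S, ∀ j ∉ S, |y j| ≤ |y i|)
    (βhat : Fin p → ℝ) (hβhat : βhat = fun i => if i ∈ S then y i else 0) :
    (∀ β : Fin p → ℝ, (vsupp β).card ≤ q →
      (1/2) * (∑ i, (y i - βhat i) ^ 2) ≤ (1/2) * ∑ i, (y i - β i) ^ 2) ∧
    ((vsupp βhat).card = q →
      ∀ θ : ℝ, 1 ≤ θ → ∀ β : Fin p → ℝ, ((vsupp β).card : ℝ) ≤ (q : ℝ) / θ →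
        ((1 - Real.sqrt (((vsupp β \ vsupp βhat).card : ℝ) / ((vsupp βhat \ vsupp β).card : ℝ)))
            * ((1/2) * ∑ i, (βhat i - β i) ^ 2)
          ≤ (1/2) * (∑ i, (y i - β i) ^ 2) - (1/2) * ∑ i, (y i - βhat i) ^ 2) ∧
        Real.sqrt (((vsupp β \ vsupp βhat).card : ℝ) / ((vsupp βhat \ vsupp β).card : ℝ))
            ≤ Real.sqrt (((vsupp β).card : ℝ) / ((vsupp βhat).card : ℝ)) ∧
        Real.sqrt (((vsupp β).card : ℝ) / ((vsupp βhat).card : ℝ)) ≤ (Real.sqrt θ)⁻¹) := by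
  obtain rfl : βhat = S.piecewise y 0 := hβhat
  subst hcard
  refine ⟨fun β hβ => by linarith [sum_sq_sub_piecewise_le y β S hsel hβ],
    fun hsupp θ hθ β hβ => ?_⟩
  have hS : vsupp (S.piecewise y 0) = S :=
    eq_of_subset_of_card_le (vsupp_piecewise_subset S y) hsupp.ge
  have hβS : #(vsupp β) ≤ #S := by
    exact_mod_cast hβ.trans (div_le_self (Nat.cast_nonneg _) hθ)
  rw [hS]
  exact ⟨one_sub_sqrt_mul_le_sum_sq_sub_sub y β S hsel hβS,
    Real.sqrt_le_sqrt (card_sdiff_div_card_sdiff_le hβS),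
    Real.sqrt_div_le_inv_sqrt (Nat.cast_nonneg _) (zero_lt_one.trans_le hθ) hβ⟩

end RRRStmt
end
end
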